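/- Let X₁,…,Xₙ be independent mean-zero random vectors in ℝ^d with ‖Xᵢ‖ ≤ B almost surely. Then for all t ≥ 0, P(‖∑ᵢ Xᵢ‖ ≥ t) ≤ 2·exp(−t²/(2nB²)). -/

import Mathlib

/-!
Pinelis' argument. Since `t ↦ cosh √t` is convex, for `‖x‖ ≤ B` the value `cosh (l * ‖s + x‖)`
lies below the chord of `cosh √·` between `(l * (‖s‖ - B))²` and `(l * (‖s‖ + B))²`, which is
affine in `⟪s, x⟫`. Averaging over a mean-zero `X` independent of `S` kills the affine term, so
`E cosh (l * ‖S + X‖) ≤ cosh (l * B) * E cosh (l * ‖S‖)`. Iterating,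
`E cosh (l * ‖∑ Xᵢ‖) ≤ cosh (l * B) ^ n ≤ exp (n * l² * B² / 2)`, and the Chernoff bound with
`exp ≤ 2 * cosh` at `l = t / (n * B²)` gives the claim.
-/

open MeasureTheory Matrix
open scoped Classical

/-- Euclidean norm on `Fin d → ℝ`. -/
noncomputable def enorm' {d : ℕ} (v : Fin d → ℝ) : ℝ := Real.sqrt (∑ i, (v i)^2)

/-- Euclidean inner product on `Fin d → ℝ`. -/
noncomputable def einner' {d : ℕ} (v w : Fin d → ℝ) : ℝ := ∑ i, v i * w i

/-- Operator (spectral) norm of a real matrix. -/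
noncomputable def opNorm {d : ℕ} (M : Matrix (Fin d) (Fin d) ℝ) : ℝ :=
  ‖(Matrix.toEuclideanCLM (𝕜 := ℝ) M :
      EuclideanSpace ℝ (Fin d) →L[ℝ] EuclideanSpace ℝ (Fin d))‖

/-- Positive semidefinite square root (junk value `0` on non-PSD matrices). -/
noncomputable def psqrt {d : ℕ} (A : Matrix (Fin d) (Fin d) ℝ) : Matrix (Fin d) (Fin d) ℝ :=
  if h : A.PosSemidef then
    (h.1.eigenvectorUnitary : Matrix (Fin d) (Fin d) ℝ) *
      diagonal (fun i => Real.sqrt (h.1.eigenvalues i)) *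
      (star h.1.eigenvectorUnitary : Matrix (Fin d) (Fin d) ℝ)
  else 0

/-- Entrywise expectation of a matrix-valued function. -/
noncomputable def mExp {d : ℕ} (p : Measure (Fin d → ℝ))
    (f : (Fin d → ℝ) → Matrix (Fin d) (Fin d) ℝ) : Matrix (Fin d) (Fin d) ℝ :=
  Matrix.of fun i j => ∫ x, f x i j ∂p

/-- The LDP operator `F(U) = E[(U x xᵀ U)/‖U x‖ · 1{x ≠ 0}] + λ U`. -/
noncomputable def FLDP {d : ℕ} (p : Measure (Fin d → ℝ)) (lam : ℝ)
    (U : Matrix (Fin d) (Fin d) ℝ) : Matrix (Fin d) (Fin d) ℝ :=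
  mExp p (fun x => if x = 0 then 0
    else (enorm' (U.mulVec x))⁻¹ • vecMulVec (U.mulVec x) (U.mulVec x)) + lam • U

/-- The DP operator `G(W) = E[(W x xᵀ W)/(1 + γ‖W x‖)] + λ W`. -/
noncomputable def FJDP {d : ℕ} (p : Measure (Fin d → ℝ)) (γ lam : ℝ)
    (W : Matrix (Fin d) (Fin d) ℝ) : Matrix (Fin d) (Fin d) ℝ :=
  mExp p (fun x => (1 + γ * enorm' (W.mulVec x))⁻¹ • vecMulVec (W.mulVec x) (W.mulVec x))
    + lam • W

/-- `sym(A) = (Aᵀ A)^{1/2}`. -/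
noncomputable def symMat {d : ℕ} (A : Matrix (Fin d) (Fin d) ℝ) : Matrix (Fin d) (Fin d) ℝ :=
  psqrt (Aᵀ * A)

/-- Smallest eigenvalue of a Hermitian matrix (junk value `0` otherwise). -/
noncomputable def lmin {d : ℕ} (A : Matrix (Fin d) (Fin d) ℝ) : ℝ :=
  if h : A.IsHermitian then ⨅ i, h.eigenvalues i else 0

/-- Largest eigenvalue of a Hermitian matrix (junk value `0` otherwise). -/
noncomputable def lmax {d : ℕ} (A : Matrix (Fin d) (Fin d) ℝ) : ℝ :=
  if h : A.IsHermitian then ⨆ i, h.eigenvalues i else 0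

open MeasureTheory ProbabilityTheory Set Real
open scoped RealInnerProductSpace

theorem ConvexOn.sub_mul_le_of_mem_Icc {s : Set ℝ} {f : ℝ → ℝ} (hf : ConvexOn ℝ s f) {a b t : ℝ}
    (ha : a ∈ s) (hb : b ∈ s) (ht : t ∈ Icc a b) :
    (b - a) * f t ≤ (b - t) * f a + (t - a) * f b := by
  obtain ⟨hat, htb⟩ := ht
  rcases hat.eq_or_lt with rfl | hat
  · linarith
  rcases htb.eq_or_lt with rfl | htb
  · linarith
  exact hf.secant_mono_aux1 ha hb hat htb

namespace Real

theorem sinh_le_mul_cosh {y : ℝ} (hy : 0 ≤ y) : sinh y ≤ y * cosh y := by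
  have hderiv (t : ℝ) : HasDerivAt (fun t => t * cosh t - sinh t) (t * sinh t) t := by
    refine (((hasDerivAt_id t).mul (hasDerivAt_cosh t)).sub (hasDerivAt_sinh t)).congr_deriv ?_
    simp only [id]
    ring
  have hmono : MonotoneOn (fun t => t * cosh t - sinh t) (Ici 0) :=
    monotoneOn_of_hasDerivWithinAt_nonneg (convex_Ici 0) (by fun_prop)
      (fun t _ => (hderiv t).hasDerivWithinAt)
      (fun t ht => by
        rw [interior_Ici, mem_Ioi] at ht
        exact mul_nonneg ht.le (sinh_nonneg_iff.2 ht.le))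
  simpa using hmono self_mem_Ici hy hy

theorem convexOn_cosh_sqrt : ConvexOn ℝ (Ici 0) fun t => cosh √t := by
  have hsqrt {t : ℝ} (ht : 0 < t) : HasDerivAt sqrt (1 / (2 * √t)) t := hasDerivAt_sqrt ht.ne'
  refine convexOn_of_hasDerivWithinAt2_nonneg (convex_Ici 0) (f' := fun t => sinh √t / (2 * √t))
    (f'' := fun t => (cosh √t - sinh √t / √t) / (4 * t)) (by fun_prop) (fun t ht => ?_)
    (fun t ht => ?_) (fun t ht => ?_) <;> rw [interior_Ici, mem_Ioi] at ht
  · exact ((hasDerivAt_cosh _).comp t (hsqrt ht)).hasDerivWithinAt.congr_deriv (by ring)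
  · refine (((hasDerivAt_sinh _).comp t (hsqrt ht)).div ((hsqrt ht).const_mul 2)
      (by positivity)).hasDerivWithinAt.congr_deriv ?_
    field_simp
    simp only [Function.comp_apply, sq_sqrt ht.le]
    field_simp
    ring
  · have hpos : 0 < √t := sqrt_pos.2 ht
    have : sinh √t / √t ≤ cosh √t := by
      rw [div_le_iff₀ hpos, mul_comm]
      exact sinh_le_mul_cosh hpos.le
    exact div_nonneg (by linarith) (by positivity)

theorem cosh_mul_le_of_sq_le {l r B u w : ℝ} (hl : 0 ≤ l) (hr : 0 < r) (hB : 0 < B)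
    (hu : |u| ≤ r * B) (hw : w ^ 2 ≤ r ^ 2 + 2 * u + B ^ 2) :
    cosh (l * w) ≤ cosh (l * r) * cosh (l * B) + sinh (l * r) * sinh (l * B) / (r * B) * u := by
  rcases hl.eq_or_lt with rfl | hl
  · simp
  obtain ⟨hu₁, hu₂⟩ := abs_le.1 hu
  have hchord := convexOn_cosh_sqrt.sub_mul_le_of_mem_Icc (mem_Ici.2 (sq_nonneg (l * (r - B))))
    (mem_Ici.2 (sq_nonneg (l * (r + B)))) (t := l ^ 2 * (r ^ 2 + 2 * u + B ^ 2))
    ⟨by nlinarith, by nlinarith⟩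
  have hsub : cosh √((l * (r - B)) ^ 2)
      = cosh (l * r) * cosh (l * B) - sinh (l * r) * sinh (l * B) := by
    rw [sqrt_sq_eq_abs, cosh_abs, mul_sub, cosh_sub]
  have hadd : cosh √((l * (r + B)) ^ 2)
      = cosh (l * r) * cosh (l * B) + sinh (l * r) * sinh (l * B) := by
    rw [sqrt_sq_eq_abs, cosh_abs, mul_add, cosh_add]
  rw [hsub, hadd] at hchord
  have hw' : cosh (l * w) ≤ cosh √(l ^ 2 * (r ^ 2 + 2 * u + B ^ 2)) := by
    rw [cosh_le_cosh, abs_of_nonneg (sqrt_nonneg _)]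
    exact abs_le_sqrt (by nlinarith)
  refine le_of_mul_le_mul_left ?_ (by positivity : 0 < 4 * l ^ 2 * r * B)
  calc 4 * l ^ 2 * r * B * cosh (l * w)
      ≤ ((l * (r + B)) ^ 2 - (l * (r - B)) ^ 2) * cosh √(l ^ 2 * (r ^ 2 + 2 * u + B ^ 2)) := by
        rw [show (l * (r + B)) ^ 2 - (l * (r - B)) ^ 2 = 4 * l ^ 2 * r * B by ring]
        gcongr
    _ ≤ _ := hchord
    _ = _ := by field_simp; ring

end Real

section InnerProductSpace

variable {E : Type*} [NormedAddCommGroup E] [InnerProductSpace ℝ E]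

theorem cosh_mul_norm_add_le {l B : ℝ} (hl : 0 ≤ l) (s : E) {x : E} (hx : ‖x‖ ≤ B) :
    cosh (l * ‖s + x‖)
      ≤ cosh (l * B) * cosh (l * ‖s‖) + sinh (l * B) / B * ⟪(sinh (l * ‖s‖) / ‖s‖) • s, x⟫ := by
  have hB₀ : 0 ≤ B := (norm_nonneg x).trans hx
  rcases eq_or_ne s 0 with rfl | hs
  · simpa [cosh_le_cosh, abs_of_nonneg, hl, hB₀] using mul_le_mul_of_nonneg_left hx hl
  rcases hB₀.eq_or_lt with rfl | hB
  · simp [norm_le_zero_iff.1 hx]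
  have hr : 0 < ‖s‖ := norm_pos_iff.2 hs
  have := cosh_mul_le_of_sq_le hl hr hB (u := ⟪s, x⟫) (w := ‖s + x‖)
    ((abs_real_inner_le_norm s x).trans (by gcongr))
    (by rw [norm_add_sq_real]; gcongr)
  rw [real_inner_smul_left]
  convert this using 1
  field_simp

theorem norm_sinh_div_norm_smul_le (l : ℝ) (s : E) :
    ‖(sinh (l * ‖s‖) / ‖s‖) • s‖ ≤ cosh (l * ‖s‖) := by
  rcases eq_or_ne s 0 with rfl | hs
  · simp
  rw [norm_smul, norm_div, norm_norm, div_mul_cancel₀ _ (norm_ne_zero_iff.2 hs), norm_eq_abs,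
    abs_sinh, ← cosh_abs (l * ‖s‖)]
  exact (sinh_lt_cosh _).le

end InnerProductSpace

section Probability

variable {Ω : Type*} [MeasurableSpace Ω] {μ : Measure Ω}

theorem ae_norm_sum_le {F ι : Type*} [NormedAddCommGroup F] {X : ι → Ω → F} {B : ℝ}
    (hbound : ∀ i, ∀ᵐ ω ∂μ, ‖X i ω‖ ≤ B) (s : Finset ι) :
    ∀ᵐ ω ∂μ, ‖∑ i ∈ s, X i ω‖ ≤ s.card * B := by
  filter_upwards [(Filter.eventually_all_finset s).2 fun i _ => hbound i] with ω hω
  simpa using (norm_sum_le _ _).trans (Finset.sum_le_sum hω)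

variable [IsProbabilityMeasure μ]

theorem integrable_cosh_mul_norm {F : Type*} [NormedAddCommGroup F] {f : Ω → F}
    (hf : AEStronglyMeasurable f μ) {C : ℝ} (hC : ∀ᵐ ω ∂μ, ‖f ω‖ ≤ C) (l : ℝ) :
    Integrable (fun ω => cosh (l * ‖f ω‖)) μ := by
  refine .of_bound (by fun_prop) (cosh (|l| * C)) ?_
  filter_upwards [hC] with ω hω
  rw [norm_eq_abs, abs_of_pos (cosh_pos _), cosh_le_cosh, abs_mul, abs_norm]
  exact (mul_le_mul_of_nonneg_left hω (abs_nonneg l)).trans (le_abs_self _)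

theorem measureReal_ge_le_two_mul_exp_mul_integral_cosh {Y : Ω → ℝ} {l : ℝ} (hl : 0 ≤ l)
    (hY : AEMeasurable Y μ) (hcosh : Integrable (fun ω => cosh (l * Y ω)) μ) (t : ℝ) :
    μ.real {ω | t ≤ Y ω} ≤ 2 * exp (-l * t) * ∫ ω, cosh (l * Y ω) ∂μ := by
  have hexp (x : ℝ) : exp x ≤ 2 * cosh x := by
    rw [cosh_eq]
    linarith [exp_pos (-x)]
  have hint : Integrable (fun ω => exp (l * Y ω)) μ :=
    (hcosh.const_mul 2).mono' (by fun_prop) (.of_forall fun ω => by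
      simpa only [norm_eq_abs, abs_of_pos (exp_pos _)] using hexp _)
  calc μ.real {ω | t ≤ Y ω} ≤ exp (-l * t) * mgf Y μ l := measure_ge_le_exp_mul_mgf t hl hint
    _ ≤ exp (-l * t) * ∫ ω, 2 * cosh (l * Y ω) ∂μ := by
        gcongr
        exact integral_mono hint (hcosh.const_mul 2) fun ω => hexp _
    _ = 2 * exp (-l * t) * ∫ ω, cosh (l * Y ω) ∂μ := by
        rw [integral_const_mul]
        ring

variable {E : Type*} [NormedAddCommGroup E] [InnerProductSpace ℝ E] [CompleteSpace E]
  [MeasurableSpace E] [BorelSpace E] [SecondCountableTopology E]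

theorem ProbabilityTheory.IndepFun.integral_cosh_mul_norm_add_le {S X : Ω → E}
    (hSX : IndepFun S X μ) {l B C : ℝ} (hl : 0 ≤ l) (hS : Measurable S) (hX : Measurable X)
    (hSC : ∀ᵐ ω ∂μ, ‖S ω‖ ≤ C) (hXB : ∀ᵐ ω ∂μ, ‖X ω‖ ≤ B) (hXmean : ∫ ω, X ω ∂μ = 0) :
    ∫ ω, cosh (l * ‖S ω + X ω‖) ∂μ ≤ cosh (l * B) * ∫ ω, cosh (l * ‖S ω‖) ∂μ := by
  set G : E → E := fun s => (sinh (l * ‖s‖) / ‖s‖) • s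
  have hG : Measurable G := by fun_prop
  have hcoshS := integrable_cosh_mul_norm hS.aestronglyMeasurable hSC l
  have hGS : Integrable (fun ω => G (S ω)) μ :=
    hcoshS.mono' (hG.comp hS).aestronglyMeasurable
      (.of_forall fun ω => norm_sinh_div_norm_smul_le l (S ω))
  have hXint : Integrable X μ := .of_bound hX.aestronglyMeasurable B hXB
  have hGSX : IndepFun (fun ω => G (S ω)) X μ := hSX.comp hG measurable_id
  have hinner_int : Integrable (fun ω => ⟪G (S ω), X ω⟫) μ :=
    hGSX.integrable_bilin hGS hXint (innerSL ℝ)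
  have hinner : ∫ ω, ⟪G (S ω), X ω⟫ ∂μ = 0 :=
    (hGSX.integral_bilin hGS hXint (innerSL ℝ)).trans (by simp [hXmean])
  have hcoshSX : Integrable (fun ω => cosh (l * ‖S ω + X ω‖)) μ :=
    integrable_cosh_mul_norm (hS.add hX).aestronglyMeasurable
      (by filter_upwards [hSC, hXB] with ω h₁ h₂ using (norm_add_le _ _).trans (add_le_add h₁ h₂))
      l
  calc ∫ ω, cosh (l * ‖S ω + X ω‖) ∂μ
      ≤ ∫ ω, cosh (l * B) * cosh (l * ‖S ω‖) + sinh (l * B) / B * ⟪G (S ω), X ω⟫ ∂μ := by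
        refine integral_mono_ae hcoshSX ((hcoshS.const_mul _).add (hinner_int.const_mul _)) ?_
        filter_upwards [hXB] with ω hω using cosh_mul_norm_add_le hl (S ω) hω
    _ = cosh (l * B) * ∫ ω, cosh (l * ‖S ω‖) ∂μ := by
        rw [integral_add (hcoshS.const_mul _) (hinner_int.const_mul _), integral_const_mul,
          integral_const_mul, hinner, mul_zero, add_zero]

theorem ProbabilityTheory.iIndepFun.integral_cosh_mul_norm_sum_le {ι : Type*} {X : ι → Ω → E}
    (hindep : iIndepFun X μ) {l B : ℝ} (hl : 0 ≤ l) (hmeas : ∀ i, Measurable (X i))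
    (hmean : ∀ i, ∫ ω, X i ω ∂μ = 0) (hbound : ∀ i, ∀ᵐ ω ∂μ, ‖X i ω‖ ≤ B) (s : Finset ι) :
    ∫ ω, cosh (l * ‖∑ i ∈ s, X i ω‖) ∂μ ≤ cosh (l * B) ^ s.card := by
  induction s using Finset.induction_on with
  | empty => simp
  | @insert a s ha ih =>
    have hindep_sum := hindep.indepFun_finsetSum_of_notMem hmeas ha
    rw [Finset.sum_fn] at hindep_sum
    have step := hindep_sum.integral_cosh_mul_norm_add_le hl
      (Finset.measurable_sum s fun i _ => hmeas i) (hmeas a) (ae_norm_sum_le hbound s) (hbound a)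
      (hmean a)
    simp only [Finset.sum_insert ha, Finset.card_insert_of_notMem ha, pow_succ', add_comm (X a _)]
    exact step.trans (by gcongr)

end Probability

/-- Hoeffding-type inequality for bounded independent mean-zero random vectors. -/
theorem stmt16 {Ω : Type*} [MeasurableSpace Ω] (μ : Measure Ω) [IsProbabilityMeasure μ]
    {d n : ℕ} (X : Fin n → Ω → EuclideanSpace ℝ (Fin d)) (B : ℝ)
    (hmeas : ∀ i, Measurable (X i))
    (hindep : ProbabilityTheory.iIndepFun X μ)
    (hmean : ∀ i, (∫ ω, X i ω ∂μ) = 0)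
    (hbound : ∀ i, ∀ᵐ ω ∂μ, ‖X i ω‖ ≤ B) :
    ∀ t : ℝ, 0 ≤ t →
      (μ {ω | t ≤ ‖∑ i, X i ω‖}).toReal
        ≤ 2 * Real.exp (-t^2 / (2 * n * B^2)) := by
  intro t ht
  rcases eq_or_ne ((n : ℝ) * B ^ 2) 0 with h0 | h0
  · rw [mul_assoc, h0, mul_zero, div_zero, exp_zero, mul_one]
    exact measureReal_le_one.trans one_le_two
  have hB : ∀ i, ∀ᵐ ω ∂μ, ‖X i ω‖ ≤ |B| :=
    fun i => (hbound i).mono fun ω h => h.trans (le_abs_self B)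
  set l := t / (n * B ^ 2)
  have hl : 0 ≤ l := by positivity
  have hnorm_meas : Measurable fun ω => ‖∑ i, X i ω‖ :=
    (Finset.measurable_sum _ fun i _ => hmeas i).norm
  calc μ.real {ω | t ≤ ‖∑ i, X i ω‖}
      ≤ 2 * exp (-l * t) * ∫ ω, cosh (l * ‖∑ i, X i ω‖) ∂μ :=
        measureReal_ge_le_two_mul_exp_mul_integral_cosh hl hnorm_meas.aemeasurable
          (integrable_cosh_mul_norm (by fun_prop) (ae_norm_sum_le hB _) l) t
    _ ≤ 2 * exp (-l * t) * exp (l ^ 2 * B ^ 2 / 2) ^ n := by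
        gcongr
        refine (hindep.integral_cosh_mul_norm_sum_le hl hmeas hmean hB _).trans ?_
        rw [Finset.card_univ, Fintype.card_fin]
        gcongr
        simpa [mul_pow] using cosh_le_exp_half_sq (l * |B|)
    _ = 2 * exp (-t ^ 2 / (2 * n * B ^ 2)) := by
        rw [← exp_nat_mul, mul_assoc, ← exp_add]
        congr 2
        simp only [l]
        field_simp
        ring
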